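/- Every proper nonempty subgroupoid of the free magma on one generator of rank at most 3 has null density. -/

import Mathlib

open Filter

def FreeMagma.len {α : Type*} : FreeMagma α → ℕ
  | FreeMagma.of _ => 1
  | FreeMagma.mul x y => x.len + y.len

noncomputable def cnt {α : Type*} (X : Set (FreeMagma α)) (n : ℕ) : ℕ :=
  Nat.card {x : FreeMagma α // x ∈ X ∧ x.len = n}

noncomputable def cntLe {α : Type*} (X : Set (FreeMagma α)) (n : ℕ) : ℕ :=
  Nat.card {x : FreeMagma α // x ∈ X ∧ x.len ≤ n}

/-!
The subgroupoid `N` does not contain the generator, so it is generated by at most three elements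
of length at least `2`, and every element of `N` of length `≤ n` is a product of at most `n / 2`
generators. Recording such a product by its bracketing (a bit string of length `< n`) and its
sequence of generators gives at most `poly(n) · 2ⁿ · 3^(n/2) = poly(n) · (2√3)ⁿ` elements, whereas
the magma has `catalan (n - 1) ≥ 4ⁿ / poly(n)` elements of length `n`. Since `2√3 < 4`, the ratio
decays like `poly(n) · (√3/2)ⁿ`.
-/

open Topology

theorem List.ncard_setOf_length_le_le {β : Type*} [Finite β] {c : ℕ} (hc : Nat.card β ≤ c)
    (hc₁ : 1 ≤ c) (m : ℕ) : {l : List β | l.length ≤ m}.ncard ≤ (m + 1) * c ^ m := by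
  induction m with
  | zero => simp [List.length_eq_zero_iff]
  | succ m ih =>
    have hsub : {l : List β | l.length ≤ m + 1} ⊆
        {[]} ∪ (fun p : β × List β => p.1 :: p.2) '' (Set.univ ×ˢ {l | l.length ≤ m}) := by
      rintro (_ | ⟨b, l⟩) hl
      · simp
      · exact Or.inr ⟨(b, l), ⟨trivial, Nat.le_of_succ_le_succ hl⟩, rfl⟩
    have hfin : {l : List β | l.length ≤ m}.Finite := List.finite_length_le β m
    calc {l : List β | l.length ≤ m + 1}.ncard
        ≤ ({[]} ∪ (fun p : β × List β => p.1 :: p.2) '' (Set.univ ×ˢ {l | l.length ≤ m})).ncard :=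
          Set.ncard_le_ncard hsub ((Set.finite_singleton _).union
            ((Set.finite_univ.prod hfin).image _))
      _ ≤ 1 + Nat.card β * {l : List β | l.length ≤ m}.ncard := by
          grw [Set.ncard_union_le, Set.ncard_singleton,
            Set.ncard_image_le (Set.finite_univ.prod hfin), Set.ncard_prod, Set.ncard_univ]
      _ ≤ 1 + c * ((m + 1) * c ^ m) := by gcongr
      _ ≤ (m + 1 + 1) * c ^ (m + 1) := by
          have := Nat.one_le_pow (m + 1) c hc₁
          rw [pow_succ] at this ⊢
          linarith

namespace FreeMagma

variable {α β : Type*}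

@[simp] theorem len_of (a : α) : (of a).len = 1 := rfl

@[simp] theorem len_mul (x y : FreeMagma α) : (x * y).len = x.len + y.len := rfl

theorem one_le_len (x : FreeMagma α) : 1 ≤ x.len := by
  induction x with
  | ih1 => exact le_rfl
  | ih2 x y => simp only [len_mul]; omega

/-- The bracketing of a word in Polish notation: `true` for a product, `false` for a letter. -/
def shape : FreeMagma α → List Bool
  | of _ => [false]
  | mul x y => true :: (shape x ++ shape y)

def leaves : FreeMagma α → List α
  | of a => [a]
  | mul x y => leaves x ++ leaves y

@[simp] theorem shape_mul (x y : FreeMagma α) : shape (x * y) = true :: (shape x ++ shape y) := rfl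

@[simp] theorem leaves_mul (x y : FreeMagma α) : leaves (x * y) = leaves x ++ leaves y := rfl

theorem length_shape (x : FreeMagma α) : (shape x).length + 1 = 2 * x.len := by
  induction x with
  | ih1 => rfl
  | ih2 x y hx hy => simp only [shape_mul, len_mul, List.length_cons, List.length_append]; omega

theorem length_leaves (x : FreeMagma α) : (leaves x).length = x.len := by
  induction x with
  | ih1 => rfl
  | ih2 x y hx hy => simp [hx, hy]

/-- Shapes form a prefix code, and a shape determines the number of leaves. -/
theorem eq_of_shape_append_eq_of_leaves_append_eq :
    ∀ {x y : FreeMagma α} {s s' : List Bool} {t t' : List α},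
      shape x ++ s = shape y ++ s' → leaves x ++ t = leaves y ++ t' → x = y ∧ s = s' ∧ t = t'
  | of _, of _, _, _, _, _, hs, ht => by simp_all [shape, leaves]
  | of _, mul _ _, _, _, _, _, hs, _ => by simp [shape] at hs
  | mul _ _, of _, _, _, _, _, hs, _ => by simp [shape] at hs
  | mul x₁ x₂, mul y₁ y₂, _, _, _, _, hs, ht => by
    simp only [shape, leaves, List.cons_append, List.append_assoc, List.cons.injEq, true_and]
      at hs ht
    obtain ⟨rfl, hs, ht⟩ := eq_of_shape_append_eq_of_leaves_append_eq hs ht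
    obtain ⟨rfl, hs, ht⟩ := eq_of_shape_append_eq_of_leaves_append_eq hs ht
    exact ⟨rfl, hs, ht⟩

theorem shape_leaves_injective :
    Function.Injective fun x : FreeMagma α => (shape x, leaves x) := by
  intro x y h
  simp only [Prod.mk.injEq] at h
  exact (eq_of_shape_append_eq_of_leaves_append_eq (s := []) (s' := []) (t := []) (t' := [])
    (by simpa using h.1) (by simpa using h.2)).1

theorem mapsTo_shape_leaves (m : ℕ) :
    Set.MapsTo (fun x : FreeMagma α => (shape x, leaves x)) {x | x.len ≤ m}
      ({s | s.length ≤ 2 * m} ×ˢ {t | t.length ≤ m}) := by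
  intro x (hx : x.len ≤ m)
  have := length_shape x
  exact ⟨show (shape x).length ≤ 2 * m by omega, (length_leaves x).trans_le hx⟩

theorem finite_setOf_len_le [Finite α] (m : ℕ) : {x : FreeMagma α | x.len ≤ m}.Finite :=
  (((List.finite_length_le Bool (2 * m)).prod (List.finite_length_le α m)).preimage
    shape_leaves_injective.injOn).subset (mapsTo_shape_leaves m)

theorem ncard_setOf_len_le_le [Finite α] {c : ℕ} (hc : Nat.card α ≤ c) (hc₁ : 1 ≤ c) (m : ℕ) :
    {x : FreeMagma α | x.len ≤ m}.ncard ≤ (2 * m + 1) * 4 ^ m * ((m + 1) * c ^ m) := by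
  calc {x : FreeMagma α | x.len ≤ m}.ncard
      ≤ ({s : List Bool | s.length ≤ 2 * m} ×ˢ {t : List α | t.length ≤ m}).ncard :=
        Set.ncard_le_ncard_of_injOn _ (mapsTo_shape_leaves m) shape_leaves_injective.injOn
          ((List.finite_length_le _ _).prod (List.finite_length_le _ _))
    _ ≤ (2 * m + 1) * 4 ^ m * ((m + 1) * c ^ m) := by
        rw [Set.ncard_prod, show (4 : ℕ) ^ m = 2 ^ (2 * m) by rw [pow_mul]; norm_num]
        gcongr
        · exact List.ncard_setOf_length_le_le
            (by rw [Nat.card_eq_fintype_card, Fintype.card_bool]) one_le_two _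
        · exact List.ncard_setOf_length_le_le hc hc₁ _

theorem mul_len_le_len_lift {k : ℕ} (f : α → FreeMagma β) (hf : ∀ a, k ≤ (f a).len)
    (w : FreeMagma α) : k * w.len ≤ (lift f w).len := by
  induction w with
  | ih1 a => simpa using hf a
  | ih2 x y hx hy => simp only [map_mul, len_mul]; lia

theorem exists_lift_eq_of_mem_closure {M : Type*} [Mul M] {G : Set M} {x : M}
    (hx : x ∈ Subsemigroup.closure G) : ∃ w : FreeMagma G, lift Subtype.val w = x := by
  induction hx using Subsemigroup.closure_induction with
  | mem g hg => exact ⟨of ⟨g, hg⟩, rfl⟩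
  | mul x y _ _ hx hy =>
    obtain ⟨u, rfl⟩ := hx
    obtain ⟨v, rfl⟩ := hy
    exact ⟨u * v, map_mul _ _ _⟩

theorem ncard_closure_inter_setOf_len_le_le {G : Set (FreeMagma α)} [Finite G] {k : ℕ}
    (hk : 0 < k) (hG : ∀ g ∈ G, k ≤ g.len) (n : ℕ) :
    ((Subsemigroup.closure G : Set (FreeMagma α)) ∩ {x | x.len ≤ n}).ncard ≤
      {w : FreeMagma G | w.len ≤ n / k}.ncard := by
  refine (Set.ncard_le_ncard ?_ ((finite_setOf_len_le (n / k)).image (lift Subtype.val))).trans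
    (Set.ncard_image_le (finite_setOf_len_le _))
  rintro x ⟨hx, hxn : x.len ≤ n⟩
  obtain ⟨w, rfl⟩ := exists_lift_eq_of_mem_closure hx
  have := mul_len_le_len_lift Subtype.val (fun g : G => hG g g.2) w
  exact ⟨w, (Nat.le_div_iff_mul_le hk).2 (by lia), rfl⟩

theorem closure_of_unit : Subsemigroup.closure {of ()} = ⊤ := by
  refine (Subsemigroup.eq_top_iff' _).2 fun x => ?_
  induction x with
  | ih1 => exact Subsemigroup.subset_closure rfl
  | ih2 x y hx hy => exact Subsemigroup.mul_mem _ hx hy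

theorem two_le_len_of_mem {N : Subsemigroup (FreeMagma Unit)} (hN : N ≠ ⊤) {x : FreeMagma Unit}
    (hx : x ∈ N) : 2 ≤ x.len := by
  cases x with
  | of =>
    refine absurd (top_le_iff.1 ?_) hN
    rw [← closure_of_unit, Subsemigroup.closure_le]
    simpa using hx
  | mul x y => exact Nat.add_le_add (one_le_len x) (one_le_len y)

def ofBinaryTree : BinaryTree Unit → FreeMagma Unit
  | .nil => of ()
  | .node _ l r => ofBinaryTree l * ofBinaryTree r

def toBinaryTree : FreeMagma α → BinaryTree Unit
  | of _ => .nil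
  | mul x y => .node () (toBinaryTree x) (toBinaryTree y)

theorem toBinaryTree_ofBinaryTree (t : BinaryTree Unit) : toBinaryTree (ofBinaryTree t) = t := by
  induction t with
  | nil => rfl
  | node _ l r hl hr => exact congrArg₂ (BinaryTree.node ()) hl hr

theorem len_ofBinaryTree (t : BinaryTree Unit) : (ofBinaryTree t).len = t.numLeaves := by
  induction t with
  | nil => rfl
  | node _ l r hl hr => exact congrArg₂ (· + ·) hl hr

theorem catalan_le_ncard_setOf_len_le (k : ℕ) :
    catalan k ≤ {x : FreeMagma Unit | x.len ≤ k + 1}.ncard := by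
  rw [← BinaryTree.treesOfNumNodesEq_card_eq_catalan, ← Set.ncard_coe_finset]
  refine Set.ncard_le_ncard_of_injOn ofBinaryTree (fun t ht => ?_)
    (Function.LeftInverse.injective toBinaryTree_ofBinaryTree).injOn (finite_setOf_len_le _)
  rw [Finset.mem_coe, BinaryTree.mem_treesOfNumNodesEq] at ht
  simp [len_ofBinaryTree, BinaryTree.numLeaves_eq_numNodes_succ, ht]

end FreeMagma

open FreeMagma

theorem cntLe_eq_ncard {α : Type*} (X : Set (FreeMagma α)) (n : ℕ) :
    cntLe X n = (X ∩ {x | x.len ≤ n}).ncard :=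
  Nat.card_coe_set_eq _

theorem four_pow_le_mul_catalan (k : ℕ) : 4 ^ k ≤ (2 * k + 1) * (k + 1) * catalan k := by
  rw [mul_assoc, succ_mul_catalan_eq_centralBinom, Nat.centralBinom_eq_two_mul_choose]
  exact Nat.four_pow_le_two_mul_add_one_mul_central_binom k

theorem four_pow_le_cntLe_univ {n : ℕ} (hn : 1 ≤ n) :
    4 ^ n ≤ 8 * n ^ 2 * cntLe (Set.univ : Set (FreeMagma Unit)) n := by
  obtain ⟨k, rfl⟩ := Nat.exists_eq_add_of_le' hn
  rw [cntLe_eq_ncard, Set.univ_inter]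
  calc 4 ^ (k + 1) = 4 * 4 ^ k := pow_succ' 4 k
    _ ≤ 4 * ((2 * k + 1) * (k + 1) * catalan k) := by gcongr; exact four_pow_le_mul_catalan k
    _ = 4 * ((2 * k + 1) * (k + 1)) * catalan k := by ring
    _ ≤ 8 * (k + 1) ^ 2 * catalan k := Nat.mul_le_mul_right _ (by nlinarith)
    _ ≤ 8 * (k + 1) ^ 2 * {x : FreeMagma Unit | x.len ≤ k + 1}.ncard := by
        gcongr; exact catalan_le_ncard_setOf_len_le k

theorem cntLe_closure_le {α : Type*} {G : Set (FreeMagma α)} [Finite G] {c : ℕ}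
    (hc : Nat.card G ≤ c) (hc₁ : 1 ≤ c) (hG : ∀ g ∈ G, 2 ≤ g.len) (n : ℕ) :
    cntLe (Subsemigroup.closure G : Set (FreeMagma α)) n ≤ (n + 1) ^ 2 * (4 * c) ^ (n / 2) := by
  rw [cntLe_eq_ncard]
  refine (ncard_closure_inter_setOf_len_le_le two_pos hG n).trans
    ((ncard_setOf_len_le_le hc hc₁ _).trans ?_)
  have h₁ : 2 * (n / 2) + 1 ≤ n + 1 := by omega
  have h₂ : n / 2 + 1 ≤ n + 1 := by omega
  calc (2 * (n / 2) + 1) * 4 ^ (n / 2) * ((n / 2 + 1) * c ^ (n / 2))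
      = (2 * (n / 2) + 1) * (n / 2 + 1) * (4 * c) ^ (n / 2) := by ring
    _ ≤ (n + 1) ^ 2 * (4 * c) ^ (n / 2) := by rw [sq]; gcongr

theorem tendsto_div_of_le_twelve_pow_of_four_pow_le {a b : ℕ → ℕ}
    (ha : ∀ n, a n ≤ (n + 1) ^ 2 * 12 ^ (n / 2)) (hb : ∀ n, 1 ≤ n → 4 ^ n ≤ 8 * n ^ 2 * b n) :
    Tendsto (fun n => (a n : ℝ) / b n) atTop (𝓝 0) := by
  set r : ℝ := √3 / 2
  have hr₀ : 0 ≤ r := by positivity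
  have hr₁ : r < 1 := by
    rw [div_lt_one two_pos, Real.sqrt_lt' two_pos]; norm_num
  have hbound : ∀ n, 1 ≤ n → (a n : ℝ) / b n ≤ 32 * ((n : ℝ) ^ 4 * r ^ n) := by
    intro n hn
    have hn' : (1 : ℝ) ≤ n := by exact_mod_cast hn
    have hb' : (4 : ℝ) ^ n ≤ 8 * n ^ 2 * b n := by exact_mod_cast hb n hn
    have hbpos : (0 : ℝ) < b n :=
      Nat.cast_pos.2 (Nat.pos_of_ne_zero fun h => by simpa [h] using hb n hn)
    have h12 : (12 : ℝ) ^ (n / 2) ≤ r ^ n * 4 ^ n := by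
      have hsq : (2 * √3) ^ 2 = 12 := by rw [mul_pow, Real.sq_sqrt] <;> norm_num
      rw [← mul_pow, show r * 4 = 2 * √3 by ring, ← hsq, ← pow_mul]
      exact pow_le_pow_right₀ (by nlinarith [Real.sqrt_nonneg 3, hsq]) (Nat.mul_div_le n 2)
    rw [div_le_iff₀ hbpos]
    calc (a n : ℝ) ≤ (n + 1) ^ 2 * 12 ^ (n / 2) := by exact_mod_cast ha n
      _ ≤ (2 * n) ^ 2 * (r ^ n * 4 ^ n) := by gcongr; linarith
      _ ≤ (2 * n) ^ 2 * (r ^ n * (8 * n ^ 2 * b n)) := by gcongr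
      _ = 32 * ((n : ℝ) ^ 4 * r ^ n) * b n := by ring
  have hlim : Tendsto (fun n : ℕ => 32 * ((n : ℝ) ^ 4 * r ^ n)) atTop (𝓝 0) := by
    simpa using (tendsto_pow_const_mul_const_pow_of_lt_one 4 hr₀ hr₁).const_mul 32
  refine tendsto_of_tendsto_of_tendsto_of_le_of_le' tendsto_const_nhds hlim
    (Eventually.of_forall fun n => by positivity) ?_
  filter_upwards [eventually_ge_atTop 1] using hbound

theorem stmt_11_general (N : Subsemigroup (FreeMagma Unit)) (hproper : N ≠ ⊤)
    (G : Set (FreeMagma Unit)) (hgen : Subsemigroup.closure G = N)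
    (hfin : G.Finite) (hrk : G.ncard ≤ 3) :
    Tendsto (fun n =>
        (cntLe (N : Set (FreeMagma Unit)) n : ℝ) /
          (cntLe (Set.univ : Set (FreeMagma Unit)) n : ℝ))
      atTop (nhds 0) := by
  have : Finite G := hfin
  have hcard : Nat.card G ≤ 3 := (Nat.card_coe_set_eq G).trans_le hrk
  have hlen : ∀ g ∈ G, 2 ≤ g.len := fun g hg =>
    two_le_len_of_mem hproper (hgen ▸ Subsemigroup.subset_closure hg)
  subst hgen
  exact tendsto_div_of_le_twelve_pow_of_four_pow_le (cntLe_closure_le hcard (by norm_num) hlen)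
    fun n hn => four_pow_le_cntLe_univ hn

theorem stmt_11 (N : Subsemigroup (FreeMagma Unit)) (hproper : N ≠ ⊤)
    (hne : (N : Set (FreeMagma Unit)).Nonempty)
    (G : Set (FreeMagma Unit)) (hgen : Subsemigroup.closure G = N)
    (hmin : ∀ G' : Set (FreeMagma Unit), Subsemigroup.closure G' = N → G ⊆ G')
    (hfin : G.Finite) (hrk : G.ncard ≤ 3) :
    Tendsto (fun n =>
        (cntLe (N : Set (FreeMagma Unit)) n : ℝ) /
          (cntLe (Set.univ : Set (FreeMagma Unit)) n : ℝ))
      atTop (nhds 0) :=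
  stmt_11_general N hproper G hgen hfin hrk
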